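/- For every nonnegative integer n, $\sum_{k=0}^n \lambda^{n-k} B_{k,\lambda}^{(c)}(x,y) S_2(n,k) = \sum_{m=0}^n \sum_{l=0}^{\lfloor m/2\rfloor} \frac{\lambda^{n-m}}{n-m+1}\binom{n}{m}\binom{m}{2l}(-1)^l y^{2l} B_{m-2l}(x)$, where $S_2(n,k)$ are Stirling numbers of the second kind and $B_j(x)$ are the type 2 Bernoulli polynomials. -/

import Mathlib

open PowerSeries Finset Complex

/-- The degenerate falling factorial `(x)_{n,λ} = x(x-λ)⋯(x-(n-1)λ)`. -/
noncomputable def dff (l x : ℂ) (n : ℕ) : ℂ := ∏ j ∈ Finset.range n, (x - j * l)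

/-- Exponential generating function of a sequence: `Σ f n * t^n / n!`. -/
noncomputable def egf (f : ℕ → ℂ) : PowerSeries ℂ := PowerSeries.mk fun n => f n / n.factorial

/-- The degenerate exponential `e_λ^x(t) = (1+λt)^{x/λ} = Σ (x)_{n,λ} t^n/n!` as a power series. -/
noncomputable def degExp (l x : ℂ) : PowerSeries ℂ := egf (dff l x)

/-- The degenerate cosine `cos_λ^{(y)}(t) = cos((y/λ) log(1+λt)) = (e_λ^{iy}(t)+e_λ^{-iy}(t))/2`. -/
noncomputable def degCos (l y : ℂ) : PowerSeries ℂ :=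
  PowerSeries.C (R := ℂ) (1/2) * (degExp l (Complex.I * y) + degExp l (-(Complex.I * y)))

/-- The degenerate sine `sin_λ^{(y)}(t) = sin((y/λ) log(1+λt)) = (e_λ^{iy}(t)-e_λ^{-iy}(t))/(2i)`. -/
noncomputable def degSin (l y : ℂ) : PowerSeries ℂ :=
  PowerSeries.C (R := ℂ) (1/(2*Complex.I)) * (degExp l (Complex.I * y) - degExp l (-(Complex.I * y)))

/-- The exponential series `e^{at} = Σ a^n t^n/n!`. -/
noncomputable def expS (a : ℂ) : PowerSeries ℂ := egf (fun n => a ^ n)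

/-- The series of `log(1+t)`. -/
noncomputable def logS : PowerSeries ℂ := PowerSeries.mk fun n => if n = 0 then 0 else (-1)^(n+1) / n


/-! Substitute `t ↦ (e^{λt} - 1)/λ`, the compositional inverse of `log(1 + λt)/λ`, into the
generating function of `B^{(c)}_{k,λ}(x, y)`. It turns each `e_λ^a(t)` into `e^{at}` (after the
substitution both solve `F' = aF`), so the generating function becomes
`t e^{xt} cos(yt) / (e^{t/2} - e^{-t/2}) · (e^{λt} - 1)/(λt)`, the product of the generating
functions of `B_n(x)`, of `cos(yt)` and of `λ^n/(n+1)`. On the other side, the coefficients of the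
powers `((e^{λt} - 1)/λ)^k` are `λ^{n-k} k! S₂(n,k)/n!`. Comparing coefficients of `t^n/n!` gives
the identity. -/

lemma coeff_egf (f : ℕ → ℂ) (n : ℕ) : coeff n (egf f) = f n / n.factorial :=
  coeff_mk _ _

lemma egf_injective : Function.Injective egf := by
  intro f g hfg
  funext n
  have hn := congrArg (coeff n) hfg
  rw [coeff_egf, coeff_egf] at hn
  exact (div_left_inj' (Nat.cast_ne_zero.mpr n.factorial_ne_zero)).mp hn

lemma egf_mul (f g : ℕ → ℂ) :
    egf f * egf g = egf fun n => ∑ m ∈ range (n + 1), (n.choose m : ℂ) * f m * g (n - m) := by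
  ext n
  rw [coeff_mul, Nat.sum_antidiagonal_eq_sum_range_succ_mk, coeff_egf, sum_div]
  refine sum_congr rfl fun m hm => ?_
  have hn : (n.factorial : ℂ) ≠ 0 := Nat.cast_ne_zero.mpr n.factorial_ne_zero
  rw [coeff_egf, coeff_egf, Nat.cast_choose ℂ (mem_range_succ_iff.mp hm)]
  field_simp

lemma coeff_expS (a : ℂ) (n : ℕ) : coeff n (expS a) = a ^ n / n.factorial :=
  coeff_egf _ n

lemma eq_expS_of_derivative_eq {F : ℂ⟦X⟧} {a : ℂ} (hF : d⁄dX ℂ F = C a * F)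
    (h0 : constantCoeff F = 1) : F = expS a := by
  ext n
  induction n with
  | zero => simpa [coeff_expS] using h0
  | succ n ih =>
    have hn := congrArg (coeff n) hF
    rw [coeff_derivative, coeff_C_mul, ih, coeff_expS] at hn
    rw [coeff_expS, Nat.factorial_succ, pow_succ]
    push_cast
    field_simp
    linear_combination hn

lemma coeff_subst_eq_sum_range {R : Type*} [CommRing R] {h : R⟦X⟧} (hh : constantCoeff h = 0)
    (F : R⟦X⟧) (n : ℕ) :
    coeff n (F.subst h) = ∑ k ∈ range (n + 1), coeff k F * coeff n (h ^ k) := by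
  rw [coeff_subst' (HasSubst.of_constantCoeff_zero' hh)]
  refine finsum_eq_sum_of_support_subset _ fun k hk => ?_
  rw [coe_range, Set.mem_Iio, Nat.lt_succ_iff]
  by_contra hnk
  refine hk ?_
  change coeff k F * coeff n (h ^ k) = 0
  rw [X_pow_dvd_iff.mp (pow_dvd_pow_of_dvd (X_dvd_iff.mpr hh) k) n (by omega),
    mul_zero]

/-- `(e^{λt} - 1)/λ`, the compositional inverse of `log(1 + λt)/λ`. -/
noncomputable def expSubOneDiv (l : ℂ) : ℂ⟦X⟧ := X * egf fun n => l ^ n / (n + 1 : ℕ)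

lemma constantCoeff_expSubOneDiv (l : ℂ) : constantCoeff (expSubOneDiv l) = 0 := by
  simp [expSubOneDiv]

lemma hasSubst_expSubOneDiv (l : ℂ) : HasSubst (expSubOneDiv l) :=
  .of_constantCoeff_zero' (constantCoeff_expSubOneDiv l)

lemma coeff_succ_expSubOneDiv (l : ℂ) (n : ℕ) :
    coeff (n + 1) (expSubOneDiv l) = l ^ n / (n + 1).factorial := by
  rw [expSubOneDiv, coeff_succ_X_mul, coeff_egf, Nat.factorial_succ]
  push_cast
  field_simp

lemma C_mul_expSubOneDiv (l : ℂ) : C l * expSubOneDiv l = expS l - 1 := by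
  ext n
  cases n with
  | zero =>
    rw [coeff_C_mul, coeff_zero_eq_constantCoeff_apply, constantCoeff_expSubOneDiv, map_sub,
      coeff_expS, coeff_one, if_pos rfl]
    simp
  | succ n =>
    rw [coeff_C_mul, coeff_succ_expSubOneDiv, map_sub, coeff_expS, coeff_one, if_neg n.succ_ne_zero,
      sub_zero, pow_succ]
    ring

lemma derivative_expSubOneDiv (l : ℂ) : d⁄dX ℂ (expSubOneDiv l) = expS l := by
  ext n
  rw [coeff_derivative, coeff_succ_expSubOneDiv, coeff_expS, Nat.factorial_succ]
  push_cast
  field_simp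

lemma coeff_expSubOneDiv_pow (l : ℂ) {n k : ℕ} (hkn : k ≤ n) :
    coeff n (expSubOneDiv l ^ k) = l ^ (n - k) * coeff n ((expS 1 - 1) ^ k) := by
  have hrescale : (egf fun n => l ^ n / (n + 1 : ℕ)) =
      rescale l (egf fun n => (1 : ℂ) ^ n / (n + 1 : ℕ)) := by
    ext n
    rw [coeff_rescale, coeff_egf, coeff_egf, one_pow]
    ring
  rw [← C_mul_expSubOneDiv, map_one, one_mul, expSubOneDiv, expSubOneDiv, hrescale, mul_pow,
    mul_pow, ← map_pow, coeff_X_pow_mul', coeff_X_pow_mul', if_pos hkn, if_pos hkn, coeff_rescale]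

lemma constantCoeff_degExp (l a : ℂ) : constantCoeff (degExp l a) = 1 := by
  simp [degExp, egf, dff]

lemma derivative_degExp (l a : ℂ) :
    (1 + C l * X) * d⁄dX ℂ (degExp l a) = C a * degExp l a := by
  ext n
  have hdff : dff l a (n + 1) = dff l a n * (a - n * l) := prod_range_succ _ _
  rw [add_mul, one_mul, mul_assoc, map_add, coeff_C_mul, coeff_C_mul, coeff_derivative]
  cases n with
  | zero => simp [degExp, coeff_egf, dff]
  | succ n =>
    rw [coeff_succ_X_mul, coeff_derivative, degExp, coeff_egf, coeff_egf, hdff,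
      Nat.factorial_succ (n + 1)]
    have hn : ((n + 1 : ℕ) : ℂ) + 1 ≠ 0 := Nat.cast_add_one_ne_zero _
    push_cast at hn ⊢
    field_simp
    ring

lemma subst_degExp (l a : ℂ) : (degExp l a).subst (expSubOneDiv l) = expS a := by
  have hs := hasSubst_expSubOneDiv l
  apply eq_expS_of_derivative_eq
  · calc d⁄dX ℂ ((degExp l a).subst (expSubOneDiv l))
        = (d⁄dX ℂ (degExp l a)).subst (expSubOneDiv l) * (1 + C l * expSubOneDiv l) := by
          rw [derivative_subst hs, derivative_expSubOneDiv, C_mul_expSubOneDiv, add_sub_cancel]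
      _ = ((1 + C l * X) * d⁄dX ℂ (degExp l a)).subst (expSubOneDiv l) := by
          rw [subst_mul hs, subst_add hs, subst_mul hs, subst_X hs, subst_C, ← map_one C,
            subst_C, mul_comm]
          rfl
      _ = C a * (degExp l a).subst (expSubOneDiv l) := by
          rw [derivative_degExp, subst_mul hs, subst_C]
          rfl
  · rw [← coeff_zero_eq_constantCoeff_apply, coeff_subst_eq_sum_range (constantCoeff_expSubOneDiv l),
      sum_range_one, pow_zero, coeff_one, if_pos rfl, mul_one, coeff_zero_eq_constantCoeff_apply,
      constantCoeff_degExp]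

lemma egf_subst_expSubOneDiv {S2 : ℕ → ℕ → ℂ}
    (hS2 : ∀ k, (expS 1 - 1) ^ k = C (k.factorial : ℂ) * egf fun n => S2 n k) (l : ℂ)
    (f : ℕ → ℂ) :
    (egf f).subst (expSubOneDiv l) =
      egf fun n => ∑ k ∈ range (n + 1), l ^ (n - k) * f k * S2 n k := by
  ext n
  rw [coeff_subst_eq_sum_range (constantCoeff_expSubOneDiv l), coeff_egf, sum_div]
  refine sum_congr rfl fun k hk => ?_
  have hk! : (k.factorial : ℂ) ≠ 0 := Nat.cast_ne_zero.mpr k.factorial_ne_zero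
  rw [coeff_egf, coeff_expSubOneDiv_pow l (mem_range_succ_iff.mp hk), hS2, coeff_C_mul, coeff_egf]
  field_simp

noncomputable def cosCoeff (y : ℂ) (j : ℕ) : ℂ := if Even j then (-1) ^ (j / 2) * y ^ j else 0

lemma subst_degCos (l y : ℂ) : (degCos l y).subst (expSubOneDiv l) = egf (cosCoeff y) := by
  have hs := hasSubst_expSubOneDiv l
  rw [degCos, subst_mul hs, subst_add hs, subst_degExp, subst_degExp, subst_C]
  ext j
  change coeff j (C (1 / 2 : ℂ) * _) = _
  rw [coeff_C_mul, map_add, coeff_expS, coeff_expS, coeff_egf, cosCoeff]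
  split_ifs with hj
  · obtain ⟨r, rfl⟩ := even_iff_two_dvd.mp hj
    rw [hj.neg_pow, mul_pow, pow_mul I, I_sq, Nat.mul_div_cancel_left r two_pos]
    ring
  · rw [(Nat.not_even_iff_odd.mp hj).neg_pow]
    ring

lemma sum_range_succ_eq_sum_range_half {M : Type*} [AddCommMonoid M] {f : ℕ → M}
    (hf : ∀ j, Odd j → f j = 0) (m : ℕ) :
    ∑ j ∈ range (m + 1), f j = ∑ l ∈ range (m / 2 + 1), f (2 * l) := by
  induction m with
  | zero => rfl
  | succ m ih =>
    rw [sum_range_succ, ih]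
    rcases Nat.even_or_odd (m + 1) with ⟨r, hr⟩ | hodd
    · rw [show (m + 1) / 2 = m / 2 + 1 by omega, sum_range_succ (n := m / 2 + 1)]
      congr 2
      omega
    · obtain ⟨r, hr⟩ := hodd
      rw [hf _ ⟨r, hr⟩, add_zero, show (m + 1) / 2 = m / 2 by omega]

lemma sum_choose_mul_cosCoeff (y : ℂ) (b : ℕ → ℂ) (m : ℕ) :
    ∑ i ∈ range (m + 1), (m.choose i : ℂ) * cosCoeff y i * b (m - i) =
      ∑ l ∈ range (m / 2 + 1), (m.choose (2 * l) : ℂ) * (-1) ^ l * y ^ (2 * l) * b (m - 2 * l) := by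
  rw [sum_range_succ_eq_sum_range_half]
  · refine sum_congr rfl fun l _ => ?_
    rw [cosCoeff, if_pos (even_two_mul l), Nat.mul_div_cancel_left l two_pos]
    ring
  · intro j hj
    rw [cosCoeff, if_neg (Nat.not_even_iff_odd.mpr hj), mul_zero, zero_mul]

theorem stmt7 (lam x y : ℝ) (Bc B : ℕ → ℂ) (S2 : ℕ → ℕ → ℂ)
    (hBc : egf Bc * (degExp lam (1/2) - degExp lam (-(1/2))) =
      PowerSeries.X * degExp lam x * degCos lam y)
    (hB : egf B * (expS (1/2) - expS (-(1/2))) = PowerSeries.X * expS x)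
    (hS2 : ∀ k, (expS 1 - 1) ^ k = PowerSeries.C (R := ℂ) (Nat.factorial k) * egf (fun n => S2 n k))
    (n : ℕ) :
    ∑ k ∈ Finset.range (n+1), (lam:ℂ)^(n-k) * Bc k * S2 n k =
      ∑ m ∈ Finset.range (n+1), ∑ l ∈ Finset.range (m/2+1),
        (lam:ℂ)^(n-m) / ((n-m+1 : ℕ) : ℂ) * (n.choose m : ℂ) * (m.choose (2*l) : ℂ) *
          (-1)^l * (y:ℂ)^(2*l) * B (m-2*l) := by
  have hs := hasSubst_expSubOneDiv lam
  have hsinh : expS (1/2) - expS (-(1/2)) ≠ 0 := fun h0 => by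
    simpa [coeff_expS] using congrArg (coeff 1) h0
  have hBc' := congrArg (subst (expSubOneDiv lam)) hBc
  rw [subst_mul hs, subst_sub hs, subst_degExp, subst_degExp, subst_mul hs, subst_mul hs,
    subst_X hs, subst_degExp, subst_degCos, egf_subst_expSubOneDiv hS2] at hBc'
  have hprod : _ = egf (cosCoeff y) * egf B * egf fun j => (lam : ℂ) ^ j / (j + 1 : ℕ) :=
    mul_right_cancel₀ hsinh <| hBc'.trans <| by
      rw [expSubOneDiv]
      linear_combination -(egf (cosCoeff y) * egf fun j => (lam : ℂ) ^ j / (j + 1 : ℕ)) * hB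
  rw [egf_mul, egf_mul] at hprod
  refine (congrFun (egf_injective hprod) n).trans (sum_congr rfl fun m _ => ?_)
  rw [sum_choose_mul_cosCoeff, mul_sum, sum_mul]
  refine sum_congr rfl fun l _ => ?_
  ring
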